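/- If X is a countably compact topological space, then every bounded subset of C_p(X) is relatively compact, where a subset F of C_p(X) is bounded if every continuous real-valued function on C_p(X) is bounded on F. -/

import Mathlib

open Topology Filter Set

/-- `Cp X`: continuous real-valued functions on `X` with the topology of pointwise
convergence (subspace of the product `X → ℝ`). -/
def Cp (X : Type*) [TopologicalSpace X] : Type _ := {f : X → ℝ // Continuous f}

instance (X : Type*) [TopologicalSpace X] : TopologicalSpace (Cp X) :=
  TopologicalSpace.induced (fun f : Cp X => (f.1 : X → ℝ)) Pi.topologicalSpace

private lemma cp_eval_cont {X : Type*} [TopologicalSpace X] (x : X) :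
    Continuous (fun u : Cp X => u.1 x) :=
  (continuous_apply x).comp continuous_induced_dom

private noncomputable def clamp (s : ℝ) : ℝ := max 0 (min 1 s)

private lemma clamp_zero {s : ℝ} (h : s ≤ 0) : clamp s = 0 :=
  max_eq_left (le_trans (min_le_right _ _) h)

private lemma clamp_one {s : ℝ} (h : 1 ≤ s) : clamp s = 1 := by
  rw [clamp, min_eq_left h]; exact max_eq_right zero_le_one

private lemma clamp_nonneg (s : ℝ) : 0 ≤ clamp s := le_max_left _ _

private lemma clamp_continuous : Continuous clamp :=
  continuous_const.max (continuous_const.min continuous_id)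

private noncomputable def avBuild {X : Type*} [TopologicalSpace X] (a : X)
    (EF : (ℕ → X) → ℕ → Cp X) (EX : (ℕ → Cp X) → ℕ → X) : ℕ → (ℕ → X) × (ℕ → Cp X)
  | 0 => (fun _ => a, fun _ => ⟨fun _ => 0, continuous_const⟩)
  | n+1 =>
      (Function.update (avBuild a EF EX n).1 (n+1)
        (EX (Function.update (avBuild a EF EX n).2 (n+1) (EF (avBuild a EF EX n).1 n)) n),
       Function.update (avBuild a EF EX n).2 (n+1) (EF (avBuild a EF EX n).1 n))

private lemma avBuild_coh {X : Type*} [TopologicalSpace X] (a : X)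
    (EF : (ℕ → X) → ℕ → Cp X) (EX : (ℕ → Cp X) → ℕ → X) :
    ∀ m n, n ≤ m → (avBuild a EF EX m).1 n = (avBuild a EF EX n).1 n ∧
      (avBuild a EF EX m).2 n = (avBuild a EF EX n).2 n := by
  intro m
  induction m with
  | zero =>
    intro n hn
    have hn0 : n = 0 := Nat.le_zero.mp hn
    subst hn0; exact ⟨rfl, rfl⟩
  | succ m ih =>
    intro n hn
    by_cases hc : n = m + 1
    · subst hc; exact ⟨rfl, rfl⟩
    · have hnm : n ≤ m := by omega
      have h1 : (avBuild a EF EX (m+1)).1 n = (avBuild a EF EX m).1 n := by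
        simp only [avBuild]
        rw [Function.update_of_ne hc]
      have h2 : (avBuild a EF EX (m+1)).2 n = (avBuild a EF EX m).2 n := by
        simp only [avBuild]
        rw [Function.update_of_ne hc]
      exact ⟨h1.trans (ih n hnm).1, h2.trans (ih n hnm).2⟩

private lemma av_cluster {X : Type*} [TopologicalSpace X]
    (hX : ∀ 𝒰 : ℕ → Set X, (∀ n, IsOpen (𝒰 n)) → (⋃ n, 𝒰 n) = Set.univ →
      ∃ s : Finset ℕ, (⋃ n ∈ s, 𝒰 n) = Set.univ)
    (x : ℕ → X) : ∃ z : X, ∀ n : ℕ, z ∈ closure (x '' Set.Ici n) := by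
  by_contra hc
  push_neg at hc
  obtain ⟨s, hs⟩ := hX (fun n => (closure (x '' Set.Ici n))ᶜ)
    (fun n => isClosed_closure.isOpen_compl)
    (by
      apply Set.eq_univ_iff_forall.mpr
      intro z
      obtain ⟨n, hn⟩ := hc z
      exact Set.mem_iUnion.mpr ⟨n, hn⟩)
  have hmem : x (s.sup id) ∈ ⋃ n ∈ s, (closure (x '' Set.Ici n))ᶜ := by
    rw [hs]; trivial
  obtain ⟨n, hns, hxn⟩ := Set.mem_iUnion₂.mp hmem
  exact hxn (subset_closure ⟨s.sup id, Finset.le_sup (f := id) hns, rfl⟩)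

private lemma av_closure_cont {X : Type*} [TopologicalSpace X]
    (hX : ∀ 𝒰 : ℕ → Set X, (∀ n, IsOpen (𝒰 n)) → (⋃ n, 𝒰 n) = Set.univ →
      ∃ s : Finset ℕ, (⋃ n ∈ s, 𝒰 n) = Set.univ)
    (F : Set (Cp X))
    (hF : ∀ g : Cp X → ℝ, Continuous g → ∃ C : ℝ, ∀ f ∈ F, |g f| ≤ C)
    (h : X → ℝ) (hh : h ∈ closure ((fun u : Cp X => u.1) '' F)) :
    Continuous h := by
  classical
  by_contra hnc
  rw [continuous_iff_continuousAt] at hnc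
  push_neg at hnc
  obtain ⟨a, ha⟩ := hnc
  obtain ⟨ε, hε, hdis⟩ :
      ∃ ε > 0, ∀ U : Set X, IsOpen U → a ∈ U → ∃ y ∈ U, ε ≤ |h y - h a| := by
    rw [ContinuousAt, Metric.tendsto_nhds] at ha
    push_neg at ha
    obtain ⟨ε, hε, hfreq⟩ := ha
    refine ⟨ε, hε, fun U hU haU => ?_⟩
    obtain ⟨y, hy1, hy2⟩ := (hfreq.and_eventually (hU.mem_nhds haU)).exists
    exact ⟨y, hy2, by rw [Real.dist_eq] at hy1; exact hy1⟩
  -- approximate elements of F at finitely many points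
  have EF : ∀ (p : ℕ → X) (n : ℕ), ∃ u : Cp X, u ∈ F ∧
      ∀ i ≤ n, |u.1 (p i) - h (p i)| < 1 / (n + 1) := by
    intro p n
    have hpos : (0:ℝ) < 1 / (n+1) := by positivity
    have hOopen : IsOpen (⋂ i ∈ Finset.range (n+1),
        (fun w : X → ℝ => w (p i)) ⁻¹' Metric.ball (h (p i)) (1/(n+1))) :=
      isOpen_biInter_finset fun i _ =>
        Metric.isOpen_ball.preimage (continuous_apply (p i))
    have hhO : h ∈ ⋂ i ∈ Finset.range (n+1),
        (fun w : X → ℝ => w (p i)) ⁻¹' Metric.ball (h (p i)) (1/(n+1)) :=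
      Set.mem_iInter₂.mpr fun i _ => by simp only [Set.mem_preimage]; rw [Metric.mem_ball]; simpa using hpos
    obtain ⟨w, hwO, u, huF, huw⟩ := mem_closure_iff.mp hh _ hOopen hhO
    refine ⟨u, huF, fun i hi => ?_⟩
    have hmem := Set.mem_iInter₂.mp hwO i (Finset.mem_range.mpr (Nat.lt_succ_of_le hi))
    have huw' : u.1 = w := huw
    rw [huw']
    simpa [Real.dist_eq] using hmem
  -- points close to `a` for finitely many functions, far for `h`
  have EX : ∀ (q : ℕ → Cp X) (n : ℕ), ∃ y : X,
      (∀ i, 1 ≤ i → i ≤ n + 1 → |(q i).1 y - (q i).1 a| < 1 / (n + 1)) ∧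
      ε ≤ |h y - h a| := by
    intro q n
    have hpos : (0:ℝ) < 1 / (n+1) := by positivity
    have hUopen : IsOpen (⋂ i ∈ Finset.Icc 1 (n+1),
        (q i).1 ⁻¹' Metric.ball ((q i).1 a) (1/(n+1))) :=
      isOpen_biInter_finset fun i _ => Metric.isOpen_ball.preimage (q i).2
    have haU : a ∈ ⋂ i ∈ Finset.Icc 1 (n+1),
        (q i).1 ⁻¹' Metric.ball ((q i).1 a) (1/(n+1)) :=
      Set.mem_iInter₂.mpr fun i _ => by simp only [Set.mem_preimage]; rw [Metric.mem_ball]; simpa using hpos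
    obtain ⟨y, hyU, hy⟩ := hdis _ hUopen haU
    refine ⟨y, fun i h1 h2 => ?_, hy⟩
    have hmem := Set.mem_iInter₂.mp hyU i (Finset.mem_Icc.mpr ⟨h1, h2⟩)
    simpa [Real.dist_eq] using hmem
  choose EFf hEF1 hEF2 using EF
  choose EXf hEX1 hEX2 using EX
  set xs : ℕ → X := fun n => (avBuild a EFf EXf n).1 n with hxs
  set fs : ℕ → Cp X := fun n => (avBuild a EFf EXf n).2 n with hfs
  have hcoh := avBuild_coh a EFf EXf
  have hx0 : xs 0 = a := rfl
  have hfs_eq : ∀ n, fs (n+1) = EFf (avBuild a EFf EXf n).1 n := by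
    intro n
    show (avBuild a EFf EXf (n+1)).2 (n+1) = _
    simp only [avBuild]
    rw [Function.update_self]
  have hxs_eq : ∀ n, xs (n+1) = EXf
      (Function.update (avBuild a EFf EXf n).2 (n+1) (EFf (avBuild a EFf EXf n).1 n)) n := by
    intro n
    show (avBuild a EFf EXf (n+1)).1 (n+1) = _
    simp only [avBuild]
    rw [Function.update_self]
  have hfmem : ∀ n, fs (n+1) ∈ F := by
    intro n; rw [hfs_eq]; exact hEF1 _ _
  have happ : ∀ n i, i ≤ n → |(fs (n+1)).1 (xs i) - h (xs i)| < 1 / (n+1) := by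
    intro n i hi
    have hp : (avBuild a EFf EXf n).1 i = xs i := (hcoh n i hi).1
    rw [hfs_eq, ← hp]
    exact hEF2 _ n i hi
  have hsep : ∀ n i, 1 ≤ i → i ≤ n + 1 →
      |(fs i).1 (xs (n+1)) - (fs i).1 a| < 1 / (n+1) := by
    intro n i h1 h2
    have hq : Function.update (avBuild a EFf EXf n).2 (n+1)
        (EFf (avBuild a EFf EXf n).1 n) i = fs i := by
      have he : Function.update (avBuild a EFf EXf n).2 (n+1)
          (EFf (avBuild a EFf EXf n).1 n) = (avBuild a EFf EXf (n+1)).2 := by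
        simp only [avBuild]
      rw [he]
      exact (hcoh (n+1) i h2).2
    rw [hxs_eq, ← hq]
    exact hEX1 _ n i h1 h2
  have hfar : ∀ n, ε ≤ |h (xs (n+1)) - h a| := by
    intro n; rw [hxs_eq]; exact hEX2 _ n
  -- cluster point
  obtain ⟨z, hz⟩ := av_cluster hX xs
  have hclup : ∀ (W : Set X), IsOpen W → z ∈ W → ∀ N, ∃ m, N ≤ m ∧ xs m ∈ W := by
    intro W hW hzW N
    obtain ⟨y, hyW, m, hm, hym⟩ := mem_closure_iff.mp (hz N) W hW hzW
    exact ⟨m, hm, by rwa [hym]⟩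
  -- each fs (i+1) agrees at z and a
  have heqz : ∀ i, (fs (i+1)).1 z = (fs (i+1)).1 a := by
    intro i
    by_contra hne
    have hdpos : 0 < |(fs (i+1)).1 z - (fs (i+1)).1 a| :=
      abs_pos.mpr (sub_ne_zero.mpr hne)
    set d := |(fs (i+1)).1 z - (fs (i+1)).1 a| with hd
    obtain ⟨N, hN⟩ := exists_nat_gt (2 / d)
    obtain ⟨m, hm, hmW⟩ := hclup ((fs (i+1)).1 ⁻¹' Metric.ball ((fs (i+1)).1 z) (d/2))
      (Metric.isOpen_ball.preimage (fs (i+1)).2)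
      (Set.mem_preimage.mpr (Metric.mem_ball_self (by positivity)))
      (max (i+1) (N+1))
    obtain ⟨m', rfl⟩ : ∃ m', m = m' + 1 := ⟨m - 1, by omega⟩
    have hsep' : |(fs (i+1)).1 (xs (m'+1)) - (fs (i+1)).1 a| < 1/(m'+1) :=
      hsep m' (i+1) (by omega) (by omega)
    have hball : |(fs (i+1)).1 (xs (m'+1)) - (fs (i+1)).1 z| < d/2 := by
      have := Set.mem_preimage.mp hmW
      rwa [Metric.mem_ball, Real.dist_eq] at this
    have hcast : (N:ℝ) + 1 ≤ (m':ℝ) + 1 := by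
      have : N + 1 ≤ m' + 1 := le_trans (le_max_right _ _) hm
      exact_mod_cast this
    have h1m : (1:ℝ)/(m'+1) < d/2 := by
      rw [div_lt_div_iff₀ (by positivity) (by norm_num)]
      have h2d : 2 < d * (N+1) := by
        rw [div_lt_iff₀ hdpos] at hN
        nlinarith
      nlinarith
    have htri : d ≤ |(fs (i+1)).1 z - (fs (i+1)).1 (xs (m'+1))| +
        |(fs (i+1)).1 (xs (m'+1)) - (fs (i+1)).1 a| := abs_sub_le _ _ _
    rw [abs_sub_comm] at hball
    linarith
  -- the unbounded continuous function
  set term : ℕ → Cp X → ℝ := fun n u =>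
    clamp (1 - 32 * |u.1 z - u.1 a| / ε) *
      ∏ k ∈ Finset.range n, clamp (4 * |u.1 (xs (k+1)) - u.1 a| / ε - 1) with hterm
  have htermc : ∀ n, Continuous (term n) := by
    intro n
    apply Continuous.mul
    · exact clamp_continuous.comp (continuous_const.sub
        ((continuous_const.mul (((cp_eval_cont z).sub (cp_eval_cont a)).abs)).div_const ε))
    · exact continuous_finset_prod _ fun k _ =>
        clamp_continuous.comp (((continuous_const.mul
          (((cp_eval_cont (xs (k+1))).sub (cp_eval_cont a)).abs)).div_const ε).sub
            continuous_const)
  have hterm_nonneg : ∀ n u, 0 ≤ term n u := fun n u =>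
    mul_nonneg (clamp_nonneg _) (Finset.prod_nonneg fun k _ => clamp_nonneg _)
  have hvanish : ∀ u : Cp X, ∃ V : Set (Cp X), IsOpen V ∧ u ∈ V ∧
      ∃ N, ∀ v ∈ V, ∀ n, N ≤ n → term n v = 0 := by
    intro u
    rcases lt_or_ge (|u.1 z - u.1 a|) (ε/16) with hlt | hge
    · obtain ⟨m, hm1, hmU⟩ := hclup (u.1 ⁻¹' Metric.ball (u.1 z) (ε/16))
        (Metric.isOpen_ball.preimage u.2)
        (Set.mem_preimage.mpr (Metric.mem_ball_self (by positivity))) 1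
      have h1 : |u.1 (xs m) - u.1 z| < ε/16 := by
        have := Set.mem_preimage.mp hmU
        rwa [Metric.mem_ball, Real.dist_eq] at this
      have hum : |u.1 (xs m) - u.1 a| < ε/8 := by
        have h2 := abs_sub_le (u.1 (xs m)) (u.1 z) (u.1 a)
        linarith
      refine ⟨(fun v : Cp X => v.1 (xs m) - v.1 a) ⁻¹' Metric.ball 0 (ε/4),
        Metric.isOpen_ball.preimage ((cp_eval_cont (xs m)).sub (cp_eval_cont a)),
        Set.mem_preimage.mpr ?_, m, ?_⟩
      · rw [Metric.mem_ball, Real.dist_eq, sub_zero]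
        linarith
      · intro v hv n hn
        have hvm : |v.1 (xs m) - v.1 a| < ε/4 := by
          have := Set.mem_preimage.mp hv
          rwa [Metric.mem_ball, Real.dist_eq, sub_zero] at this
        obtain ⟨m', rfl⟩ : ∃ m', m = m' + 1 := ⟨m - 1, by omega⟩
        have hzero : clamp (4 * |v.1 (xs (m'+1)) - v.1 a| / ε - 1) = 0 := by
          apply clamp_zero
          rw [sub_nonpos, div_le_one hε]
          linarith
        show clamp _ * _ = 0
        rw [Finset.prod_eq_zero (Finset.mem_range.mpr (by omega : m' < n)) hzero, mul_zero]
    · refine ⟨(fun v : Cp X => |v.1 z - v.1 a|) ⁻¹' Set.Ioi (ε/32),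
        isOpen_Ioi.preimage (((cp_eval_cont z).sub (cp_eval_cont a)).abs),
        Set.mem_preimage.mpr ?_, 0, ?_⟩
      · show ε/32 < |u.1 z - u.1 a|
        linarith
      · intro v hv n _
        have hvz : ε/32 < |v.1 z - v.1 a| := Set.mem_preimage.mp hv
        have hzero : clamp (1 - 32 * |v.1 z - v.1 a| / ε) = 0 := by
          apply clamp_zero
          rw [sub_nonpos, le_div_iff₀ hε]
          linarith
        show clamp _ * _ = 0
        rw [hzero, zero_mul]
  have hsummable : ∀ u : Cp X, Summable (fun n => term n u) := by
    intro u
    obtain ⟨V, hVo, huV, N, hN⟩ := hvanish u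
    exact summable_of_ne_finset_zero (s := Finset.range N) fun n hn =>
      hN u huV n (le_of_not_gt fun hlt => hn (Finset.mem_range.mpr hlt))
  set g : Cp X → ℝ := fun u => ∑' n, term n u with hg
  have hgc : Continuous g := by
    rw [continuous_iff_continuousAt]
    intro u
    obtain ⟨V, hVo, huV, N, hN⟩ := hvanish u
    have hGc : Continuous (fun v => ∑ n ∈ Finset.range N, term n v) :=
      continuous_finset_sum _ fun n _ => htermc n
    apply ContinuousAt.congr hGc.continuousAt
    filter_upwards [hVo.mem_nhds huV] with v hv
    exact (tsum_eq_sum fun n hn =>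
      hN v hv n (le_of_not_gt fun hlt => hn (Finset.mem_range.mpr hlt))).symm
  have hlow : ∀ n : ℕ, 4/ε ≤ (n:ℝ)+1 → ((n:ℝ)+1) ≤ g (fs (n+1)) := by
    intro n hn
    have hterm1 : ∀ m ∈ Finset.range (n+1), term m (fs (n+1)) = 1 := by
      intro m hm
      have hφ1 : clamp (1 - 32 * |(fs (n+1)).1 z - (fs (n+1)).1 a| / ε) = 1 := by
        rw [heqz n, sub_self, abs_zero]
        apply clamp_one
        simp
      have hθ1 : ∀ k ∈ Finset.range m,
          clamp (4 * |(fs (n+1)).1 (xs (k+1)) - (fs (n+1)).1 a| / ε - 1) = 1 := by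
        intro k hk
        have hkn : k + 1 ≤ n := by
          have h1 := Finset.mem_range.mp hk
          have h2 := Finset.mem_range.mp hm
          omega
        have h1 := happ n (k+1) hkn
        have h2 := happ n 0 (Nat.zero_le n)
        have h3 := hfar k
        rw [hx0] at h2
        have e4 : 1/((n:ℝ)+1) ≤ ε/4 := by
          rw [div_le_div_iff₀ (by positivity) (by norm_num)]
          rw [div_le_iff₀ hε] at hn
          linarith
        have ht : ε/2 ≤ |(fs (n+1)).1 (xs (k+1)) - (fs (n+1)).1 a| := by
          have tri1 : |h (xs (k+1)) - h a| ≤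
              |h (xs (k+1)) - (fs (n+1)).1 a| + |(fs (n+1)).1 a - h a| := abs_sub_le _ _ _
          have tri2 : |h (xs (k+1)) - (fs (n+1)).1 a| ≤
              |h (xs (k+1)) - (fs (n+1)).1 (xs (k+1))| +
              |(fs (n+1)).1 (xs (k+1)) - (fs (n+1)).1 a| := abs_sub_le _ _ _
          have e1 : |h (xs (k+1)) - (fs (n+1)).1 (xs (k+1))| < 1/((n:ℝ)+1) := by
            rw [abs_sub_comm]; exact h1
          have e2 : |(fs (n+1)).1 a - h a| < 1/((n:ℝ)+1) := h2
          linarith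
        apply clamp_one
        rw [le_sub_iff_add_le, le_div_iff₀ hε]
        linarith
      show clamp _ * _ = 1
      rw [hφ1, one_mul, Finset.prod_congr rfl hθ1, Finset.prod_const_one]
    have hsum := Summable.sum_le_tsum (Finset.range (n+1))
      (fun m _ => hterm_nonneg m _) (hsummable (fs (n+1)))
    rw [Finset.sum_congr rfl hterm1, Finset.sum_const, Finset.card_range,
      nsmul_eq_mul, mul_one] at hsum
    have : ((n:ℝ)+1) = ((n+1 : ℕ) : ℝ) := by push_cast; ring
    rw [this]
    exact hsum
  obtain ⟨C, hC⟩ := hF g hgc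
  obtain ⟨n, hn⟩ := exists_nat_gt (max C (4/ε))
  have h1 : 4/ε ≤ (n:ℝ)+1 := by
    have := le_max_right C (4/ε)
    linarith
  have h2 := hlow n h1
  have h3 := hC (fs (n+1)) (hfmem n)
  have h4 : g (fs (n+1)) ≤ C := le_trans (le_abs_self _) h3
  have h5 : C < (n:ℝ)+1 := by
    have := le_max_left C (4/ε)
    linarith
  linarith

/-- Asanov–Velichko theorem: if `X` is countably compact, then every bounded subset of
`C_p(X)` is relatively compact. -/
theorem asanov_velichko {X : Type*} [TopologicalSpace X]
    (hX : ∀ 𝒰 : ℕ → Set X, (∀ n, IsOpen (𝒰 n)) → (⋃ n, 𝒰 n) = Set.univ →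
      ∃ s : Finset ℕ, (⋃ n ∈ s, 𝒰 n) = Set.univ)
    (F : Set (Cp X))
    (hF : ∀ g : Cp X → ℝ, Continuous g → ∃ C : ℝ, ∀ f ∈ F, |g f| ≤ C) :
    IsCompact (closure F) := by
  classical
  set val : Cp X → (X → ℝ) := fun u => u.1 with hval
  have hemb : Topology.IsEmbedding val := ⟨⟨rfl⟩, fun a b hab => Subtype.ext hab⟩
  -- pointwise bounds
  have hB : ∀ x : X, ∃ C : ℝ, ∀ f ∈ F, |f.1 x| ≤ C := fun x => hF _ (cp_eval_cont x)
  choose B hBs using hB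
  -- the closure of the image in the product is compact
  have hsub : val '' F ⊆ Set.univ.pi (fun x => Set.Icc (-B x) (B x)) := by
    rintro - ⟨u, huF, rfl⟩ x -
    have := hBs x u huF
    rw [abs_le] at this
    exact this
  have hKc : IsCompact (closure (val '' F)) :=
    IsCompact.of_isClosed_subset
      (isCompact_univ_pi (fun x => isCompact_Icc (a := -B x) (b := B x)))
      isClosed_closure
      (closure_minimal hsub (isClosed_set_pi fun x _ => isClosed_Icc))
  have hcl : ∀ w ∈ closure (val '' F), Continuous w :=
    fun w hw => av_closure_cont hX F hF w hw
  have hrange : closure (val '' F) ⊆ Set.range val :=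
    fun w hw => ⟨⟨w, hcl w hw⟩, rfl⟩
  have hclo : closure F = val ⁻¹' closure (val '' F) :=
    hemb.toIsInducing.closure_eq_preimage_closure_image F
  rw [hemb.isCompact_iff]
  have himg : val '' closure F = closure (val '' F) := by
    rw [hclo, Set.image_preimage_eq_inter_range,
      Set.inter_eq_self_of_subset_left hrange]
  rw [himg]
  exact hKc
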